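/- arXiv:1505.01731 — 2 statements merged into one kernel-verified Lean document; each statement's English description precedes it below -/
import Mathlib

section
/- Let d, k ≥ 1 be integers. There exists a constant a₀ depending only on d such that the following holds for every integer a ≥ a₀: for every d-uniform hypergraph G = (V, E) with hs(G) ≤ k, letting U = {C ⊆ V : s_G(C) > ak} and U' = {C ∈ U : s_G(C') ≤ k for every proper subset C' ⊊ C}, one has |U'| ≤ (d−1)! · k^{d−1}. -/
open scoped Classical

/-- The minimum size of a hitting set of the family `F`: a finite set of
vertices intersecting every member of `F`. -/
noncomputable def hsNum {α : Type*} (F : Finset (Finset α)) : ℕ :=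
  sInf {n | ∃ H : Finset α, (∀ D ∈ F, ∃ v ∈ H, v ∈ D) ∧ H.card = n}

/-- `T` is a sunflower with core `C` in the hypergraph with edge set `E`:
a set of edges, each containing `C`, whose pairwise intersections equal `C`. -/
def IsSunflower {α : Type*} [DecidableEq α] (E : Finset (Finset α)) (C : Finset α)
    (T : Finset (Finset α)) : Prop :=
  T ⊆ E ∧ (∀ D ∈ T, C ⊆ D) ∧ ∀ D ∈ T, ∀ D' ∈ T, D ≠ D' → D ∩ D' = C

/-- `sunflowerNum E C` is the maximum number of petals of a sunflower with
core `C` in the hypergraph with edge set `E` (it is `0` if no edge contains `C`). -/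
noncomputable def sunflowerNum {α : Type*} [DecidableEq α] (E : Finset (Finset α))
    (C : Finset α) : ℕ :=
  sSup {n | ∃ T : Finset (Finset α), IsSunflower E C T ∧ T.card = n}

universe u

/-!
The petals of a sunflower are disjoint outside its core, so a set of fewer than `s(C)` vertices
meeting every petal of a maximum sunflower at `C` meets `C` itself. Hence a minimum hitting set
(at most `k` vertices) meets every large core. If moreover `C₀ ⊊ C` with `s(C₀) ≤ k`, then every
edge strictly containing `C₀` meets one of the at most `k` petals of a maximum sunflower at `C₀`
outside `C₀` (otherwise it would be a further petal); for `a > d` these at most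
`k (d - |C₀|) < s(C)` vertices meet every petal at `C`, so `C` contains one of them. A minimal
large core therefore arises by starting from a vertex of the hitting set and adding, to a core
`C₀` of size `j`, one of at most `k (d - j)` vertices. As it has fewer than `d` vertices, there
are at most `k ⋅ ∏_{j=1}^{d-2} k (d - j) = (d - 1)! k^(d - 1)` of them.
-/

variable {α : Type*} [DecidableEq α] {E T : Finset (Finset α)} {C : Finset α}

lemma bddAbove_card_isSunflower (E : Finset (Finset α)) (C : Finset α) :
    BddAbove {n | ∃ T, IsSunflower E C T ∧ T.card = n} :=
  ⟨E.card, by rintro _ ⟨T, hT, rfl⟩; exact Finset.card_le_card hT.1⟩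

lemma IsSunflower.card_le_sunflowerNum (hT : IsSunflower E C T) : T.card ≤ sunflowerNum E C :=
  le_csSup (bddAbove_card_isSunflower E C) (by exact ⟨T, hT, rfl⟩)

lemma exists_isSunflower_card_eq_sunflowerNum (E : Finset (Finset α)) (C : Finset α) :
    ∃ T, IsSunflower E C T ∧ T.card = sunflowerNum E C :=
  Nat.sSup_mem ⟨0, by exact ⟨∅, by simp [IsSunflower], rfl⟩⟩ (bddAbove_card_isSunflower E C)

lemma card_lt_of_one_lt_sunflowerNum {d : ℕ} (hE : ∀ D ∈ E, D.card ≤ d)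
    (hC : 1 < sunflowerNum E C) : C.card < d := by
  obtain ⟨T, hT, hTcard⟩ := exists_isSunflower_card_eq_sunflowerNum E C
  obtain ⟨P, hP, Q, hQ, hPQ⟩ := Finset.one_lt_card.mp (hTcard ▸ hC)
  by_contra! hdC
  have hCeq : ∀ R ∈ T, C = R := fun R hR =>
    Finset.eq_of_subset_of_card_le (hT.2.1 R hR) ((hE R (hT.1 hR)).trans hdC)
  exact hPQ ((hCeq P hP).symm.trans (hCeq Q hQ))

lemma IsSunflower.exists_mem_core_of_card_lt {W : Finset α} (hT : IsSunflower E C T)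
    (hW : ∀ P ∈ T, ∃ v ∈ W, v ∈ P) (hcard : W.card < T.card) : ∃ v ∈ W, v ∈ C := by
  obtain ⟨P₀, hP₀⟩ := Finset.card_pos.mp (W.card.zero_le.trans_lt hcard)
  obtain ⟨v₀, -, -⟩ := hW P₀ hP₀
  have : Nonempty α := ⟨v₀⟩
  choose! f hfW hfP using hW
  obtain ⟨P, hP, Q, hQ, hPQ, hf⟩ := Finset.exists_ne_map_eq_of_card_lt_of_maps_to hcard hfW
  refine ⟨f P, hfW P hP, ?_⟩
  rw [← hT.2.2 P hP Q hQ hPQ, Finset.mem_inter]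
  exact ⟨hfP P hP, hf ▸ hfP Q hQ⟩

lemma IsSunflower.exists_mem_biUnion_sdiff (hT : IsSunflower E C T)
    (hmax : sunflowerNum E C ≤ T.card) {D : Finset α} (hD : D ∈ E) (hCD : C ⊂ D) :
    ∃ v ∈ T.biUnion (· \ C), v ∈ D := by
  by_contra! hdisj
  have hDT : D ∉ T := fun hDT => by
    obtain ⟨v, hvD, hvC⟩ := Finset.exists_of_ssubset hCD
    exact hdisj v (Finset.mem_biUnion.mpr ⟨D, hDT, Finset.mem_sdiff.mpr ⟨hvD, hvC⟩⟩) hvD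
  have hinter : ∀ P ∈ T, D ∩ P = C := fun P hP => by
    refine Finset.Subset.antisymm (fun v hv => ?_) (Finset.subset_inter hCD.subset (hT.2.1 P hP))
    rw [Finset.mem_inter] at hv
    by_contra hvC
    exact hdisj v (Finset.mem_biUnion.mpr ⟨P, hP, Finset.mem_sdiff.mpr ⟨hv.2, hvC⟩⟩) hv.1
  have hins : IsSunflower E C (insert D T) := by
    refine ⟨Finset.insert_subset hD hT.1, ?_, ?_⟩
    · simpa [hCD.subset] using hT.2.1
    · simp only [Finset.mem_insert]
      rintro P (rfl | hP) Q (rfl | hQ) hPQ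
      · exact absurd rfl hPQ
      · exact hinter Q hQ
      · rw [Finset.inter_comm]; exact hinter P hP
      · exact hT.2.2 P hP Q hQ hPQ
  have := hins.card_le_sunflowerNum
  rw [Finset.card_insert_of_notMem hDT] at this
  omega

lemma IsSunflower.card_biUnion_sdiff_le {d : ℕ} (hT : IsSunflower E C T)
    (hE : ∀ D ∈ E, D.card ≤ d) : (T.biUnion (· \ C)).card ≤ T.card * (d - C.card) :=
  Finset.card_biUnion_le_card_mul _ _ _ fun P hP => by
    rw [Finset.card_sdiff_of_subset (hT.2.1 P hP)]
    exact Nat.sub_le_sub_right (hE P (hT.1 hP)) _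

lemma IsSunflower.exists_mem_biUnion_sdiff_of_ssubset {d : ℕ} {C₀ : Finset α}
    {T₀ : Finset (Finset α)} (hT₀ : IsSunflower E C₀ T₀) (hmax : sunflowerNum E C₀ ≤ T₀.card)
    (hE : ∀ D ∈ E, D.card ≤ d) (hC : T₀.card * d < sunflowerNum E C) (hC₀C : C₀ ⊂ C) :
    ∃ v ∈ T₀.biUnion (· \ C₀), v ∈ C := by
  obtain ⟨T, hT, hTcard⟩ := exists_isSunflower_card_eq_sunflowerNum E C
  refine hT.exists_mem_core_of_card_lt
    (fun P hP => hT₀.exists_mem_biUnion_sdiff hmax (hT.1 hP) (hC₀C.trans_le (hT.2.1 P hP))) ?_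
  calc (T₀.biUnion (· \ C₀)).card ≤ T₀.card * (d - C₀.card) := hT₀.card_biUnion_sdiff_le hE
    _ ≤ T₀.card * d := Nat.mul_le_mul_left _ (Nat.sub_le _ _)
    _ < T.card := hTcard ▸ hC

lemma exists_hitting_card_eq_hsNum {F : Finset (Finset α)} (hF : ∀ D ∈ F, D.Nonempty) :
    ∃ H : Finset α, (∀ D ∈ F, ∃ v ∈ H, v ∈ D) ∧ H.card = hsNum F := by
  have hcover : ∀ D ∈ F, ∃ v ∈ F.biUnion id, v ∈ D := fun D hD =>
    (hF D hD).imp fun v hv => ⟨Finset.mem_biUnion.mpr ⟨D, hD, hv⟩, hv⟩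
  exact Nat.sInf_mem (s := {n | ∃ H : Finset α, (∀ D ∈ F, ∃ v ∈ H, v ∈ D) ∧ H.card = n})
    ⟨_, _, hcover, rfl⟩

/-- The members of `U'` in the theorem, for the threshold `t = a * k`. -/
def IsMinimalLargeCore (E : Finset (Finset α)) (t k : ℕ) (C : Finset α) : Prop :=
  t < sunflowerNum E C ∧ ∀ C' ⊂ C, sunflowerNum E C' ≤ k

section Counting

variable {d k t : ℕ} (hk : 1 ≤ k) (ht : (d + 1) * k ≤ t)
include hk ht

theorem exists_finset_cover_minimalLargeCore_of_subset (hE : ∀ D ∈ E, D.card ≤ d) (m : ℕ) :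
    ∀ C₀ : Finset α, d ≤ C₀.card + m + 1 → ∃ S : Finset (Finset α),
      S.card ≤ (m + 1).factorial * k ^ m ∧ ∀ C, IsMinimalLargeCore E t k C → C₀ ⊆ C → C ∈ S := by
  have hlt : ∀ C, IsMinimalLargeCore E t k C → C.card < d := fun C hC =>
    card_lt_of_one_lt_sunflowerNum hE (by nlinarith [hC.1])
  induction m with
  | zero =>
    intro C₀ hC₀
    refine ⟨{C₀}, by simp, fun C hC hC₀C => ?_⟩
    rw [Finset.mem_singleton]
    exact (Finset.eq_of_subset_of_card_le hC₀C (by have := hlt C hC; omega)).symm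
  | succ m ih =>
    intro C₀ hC₀
    rcases lt_or_ge k (sunflowerNum E C₀) with hs | hs
    · refine ⟨{C₀}, ?_, fun C hC hC₀C => Finset.mem_singleton.mpr ?_⟩
      · exact Nat.mul_pos (Nat.factorial_pos _) (pow_pos hk _)
      · by_contra hne
        exact (hC.2 C₀ (hC₀C.ssubset_of_ne (Ne.symm hne))).not_gt hs
    obtain ⟨T₀, hT₀, hT₀card⟩ := exists_isSunflower_card_eq_sunflowerNum E C₀
    set W := T₀.biUnion (· \ C₀)
    have hW : ∀ v ∈ W, v ∉ C₀ := fun v hv => by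
      obtain ⟨P, -, hvP⟩ := Finset.mem_biUnion.mp hv
      exact (Finset.mem_sdiff.mp hvP).2
    have hWcard : W.card ≤ k * (m + 2) := calc
      W.card ≤ T₀.card * (d - C₀.card) := hT₀.card_biUnion_sdiff_le hE
      _ ≤ k * (m + 2) := Nat.mul_le_mul (hT₀card ▸ hs) (by omega)
    have hcover : ∀ v ∈ W, ∃ S : Finset (Finset α), S.card ≤ (m + 1).factorial * k ^ m ∧
        ∀ C, IsMinimalLargeCore E t k C → insert v C₀ ⊆ C → C ∈ S := fun v hv =>
      ih (insert v C₀) (by rw [Finset.card_insert_of_notMem (hW v hv)]; omega)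
    choose! S hScard hS using hcover
    refine ⟨W.biUnion S, ?_, fun C hC hC₀C => ?_⟩
    · calc (W.biUnion S).card ≤ W.card * ((m + 1).factorial * k ^ m) :=
            Finset.card_biUnion_le_card_mul _ _ _ hScard
        _ ≤ k * (m + 2) * ((m + 1).factorial * k ^ m) := Nat.mul_le_mul_right _ hWcard
        _ = (m + 2).factorial * k ^ (m + 1) := by rw [Nat.factorial_succ (m + 1)]; ring
    have hC₀C' : C₀ ⊂ C := hC₀C.ssubset_of_ne fun h => by
      have := hC.1; rw [← h] at this; nlinarith
    obtain ⟨v, hvW, hvC⟩ := hT₀.exists_mem_biUnion_sdiff_of_ssubset hT₀card.ge hE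
      (by rw [hT₀card]; nlinarith [hC.1]) hC₀C'
    exact Finset.mem_biUnion.mpr ⟨v, hvW, hS v hvW C hC (Finset.insert_subset hvC hC₀C)⟩

theorem exists_finset_cover_minimalLargeCore (hE : ∀ D ∈ E, D.card = d) (hhs : hsNum E ≤ k) :
    ∃ S : Finset (Finset α), S.card ≤ (d - 1).factorial * k ^ (d - 1) ∧
      ∀ C, IsMinimalLargeCore E t k C → C ∈ S := by
  have hE' : ∀ D ∈ E, D.card ≤ d := fun D hD => (hE D hD).le
  rcases Nat.lt_or_ge d 2 with hd | hd
  · refine ⟨{∅}, by simp [show d - 1 = 0 by omega], fun C hC => ?_⟩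
    have := card_lt_of_one_lt_sunflowerNum hE' (by nlinarith [hC.1])
    simpa using (show C.card = 0 by omega)
  obtain ⟨H, hH, hHcard⟩ :=
    exists_hitting_card_eq_hsNum fun D hD => Finset.card_pos.mp (by rw [hE D hD]; omega)
  choose S hScard hS using fun v : α =>
    exists_finset_cover_minimalLargeCore_of_subset hk ht hE' (d - 2) {v} (by simp; omega)
  refine ⟨H.biUnion S, ?_, fun C hC => ?_⟩
  · obtain ⟨n, rfl⟩ : ∃ n, d = n + 2 := ⟨d - 2, by omega⟩
    calc (H.biUnion S).card ≤ H.card * ((n + 1).factorial * k ^ n) :=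
          Finset.card_biUnion_le_card_mul _ _ _ fun v _ => hScard v
      _ ≤ k * ((n + 1).factorial * k ^ n) := Nat.mul_le_mul_right _ (hHcard ▸ hhs)
      _ = (n + 2 - 1).factorial * k ^ (n + 2 - 1) := by rw [show n + 2 - 1 = n + 1 by omega]; ring
  obtain ⟨T, hT, hTcard⟩ := exists_isSunflower_card_eq_sunflowerNum E C
  obtain ⟨v, hvH, hvC⟩ := hT.exists_mem_core_of_card_lt (fun P hP => hH P (hT.1 hP))
    (by rw [hTcard, hHcard]; nlinarith [hC.1])
  exact Finset.mem_biUnion.mpr ⟨v, hvH, hS v C hC (Finset.singleton_subset_iff.mpr hvC)⟩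

end Counting

theorem stmt_9_general (d : ℕ) :
    ∃ a₀ : ℕ, ∀ k : ℕ, 1 ≤ k → ∀ a : ℕ, a₀ ≤ a →
      ∀ (α : Type u) [DecidableEq α] (E : Finset (Finset α)),
        (∀ D ∈ E, D.card = d) → hsNum E ≤ k →
        {C : Finset α | a * k < sunflowerNum E C ∧
            ∀ C' ⊂ C, sunflowerNum E C' ≤ k}.Finite ∧
        {C : Finset α | a * k < sunflowerNum E C ∧
            ∀ C' ⊂ C, sunflowerNum E C' ≤ k}.ncard ≤
          Nat.factorial (d - 1) * k ^ (d - 1) := by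
  refine ⟨d + 1, fun k hk a ha α _ E hE hhs => ?_⟩
  obtain ⟨S, hScard, hS⟩ :=
    exists_finset_cover_minimalLargeCore hk (Nat.mul_le_mul_right k ha) hE hhs
  have hsub : {C : Finset α | a * k < sunflowerNum E C ∧
      ∀ C' ⊂ C, sunflowerNum E C' ≤ k} ⊆ S := fun C hC => hS C hC
  exact ⟨S.finite_toSet.subset hsub,
    (Set.ncard_le_ncard hsub S.finite_toSet).trans (by rwa [Set.ncard_coe_finset])⟩

theorem stmt_9 (d : ℕ) (hd : 1 ≤ d) :
    ∃ a₀ : ℕ, ∀ k : ℕ, 1 ≤ k → ∀ a : ℕ, a₀ ≤ a →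
      ∀ (α : Type u) [DecidableEq α] (E : Finset (Finset α)),
        (∀ D ∈ E, D.card = d) → hsNum E ≤ k →
        {C : Finset α | a * k < sunflowerNum E C ∧
            ∀ C' ⊂ C, sunflowerNum E C' ≤ k}.Finite ∧
        {C : Finset α | a * k < sunflowerNum E C ∧
            ∀ C' ⊂ C, sunflowerNum E C' ≤ k}.ncard ≤
          Nat.factorial (d - 1) * k ^ (d - 1) :=
  stmt_9_general d
end

section
/- Let ν ≥ 1 be an integer and let G = (V, E) be a finite simple graph whose arboricity is at most ν, i.e., whose edge set can be partitioned into at most ν forests. Call a vertex heavy if its degree is at least 2ν + 3, and call an edge shallow if neither of its endpoints is heavy; let h be the number of heavy vertices and s the number of shallow edges. Then max{h, s}/(2.5ν + 4.5) ≤ matching(G) ≤ 2·max{h, s}. -/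
/-!
Write `μ` for the matching number, and call a graph `ν`-sparse when every vertex set `t` spans at
most `ν (|t| - 1)` edges, as every union of `ν` forests does.

* `μ ≤ h + s`: an edge of a maximum matching is shallow or contains a heavy vertex, and distinct
  matching edges share no vertex.
* `h ≤ 4 μ`: the heavy vertices missed by a maximum matching form an independent set `I` whose
  neighbours are all matched, so sparsity gives `(2ν + 3) |I| ≤ ν (2μ + |I|)`, whence `|I| ≤ 2μ`.
* `s ≤ (2ν + 2) μ`: the shallow edges form a `ν`-sparse graph of maximum degree `≤ 2ν + 2`. If
  deleting some vertex lowers `μ`, induct. Otherwise every vertex is missed by a maximum matching,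
  so by Gallai's lemma a maximum matching misses at most one vertex of each component `C`, and
  summing `ν (|C| - 1)` over the components bounds the number of edges by `2νμ`.

Matchings are handled as involutions, so that exchanging two matchings along an alternating path
is a piecewise definition.
-/

open scoped Classical

/-- `M` is a matching of the graph `G`: a finite set of edges of `G`
that are pairwise vertex-disjoint. -/
def IsMatchingSet {V : Type*} (G : SimpleGraph V) (M : Finset (Sym2 V)) : Prop :=
  (↑M : Set (Sym2 V)) ⊆ G.edgeSet ∧
    ∀ e ∈ M, ∀ f ∈ M, e ≠ f → ∀ v : V, v ∈ e → v ∉ f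

/-- The maximum size of a matching of `G`. -/
noncomputable def matchNum {V : Type*} (G : SimpleGraph V) : ℕ :=
  sSup {n | ∃ M : Finset (Sym2 V), IsMatchingSet G M ∧ M.card = n}

open Finset

namespace SimpleGraph

variable {V : Type*}

def IsSparse (G : SimpleGraph V) (k : ℕ) : Prop :=
  ∀ (t : Finset V) (s : Finset (Sym2 V)), (∀ e ∈ s, e ∈ G.edgeSet ∧ ∀ x ∈ e, x ∈ t) →
    #s ≤ k * (#t - 1)

theorem IsSparse.anti {G H : SimpleGraph V} {k : ℕ} (hHG : H ≤ G) (hG : G.IsSparse k) :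
    H.IsSparse k :=
  fun t s hs => hG t s fun e he => ⟨edgeSet_mono hHG (hs e he).1, (hs e he).2⟩

theorem IsAcyclic.card_edgeFinset_lt [Fintype V] [Nonempty V] {G : SimpleGraph V}
    [Fintype G.edgeSet] (hG : G.IsAcyclic) : #G.edgeFinset < Fintype.card V := by
  obtain ⟨T, hGT, hT⟩ := (⊤ : SimpleGraph V).exists_maximal_isAcyclic_of_le_isAcyclic le_top hG
  have hTree : T.IsTree := maximal_isAcyclic_iff_isTree.mp
    ⟨hT.prop.2, fun H hH hle => hT.le_of_ge ⟨le_top, hH⟩ hle⟩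
  rw [← hTree.card_edgeFinset]
  exact Nat.lt_succ_of_le (card_le_card (edgeFinset_mono hGT))

theorem IsAcyclic.isSparse {G : SimpleGraph V} (hG : G.IsAcyclic) : G.IsSparse 1 := by
  intro t s hs
  rw [one_mul]
  obtain rfl | ht := t.eq_empty_or_nonempty
  · rw [card_empty, Nat.zero_sub, Nat.le_zero, card_eq_zero, eq_empty_iff_forall_notMem]
    exact fun e he => by simpa using (hs e he).2 _ (Sym2.out_fst_mem e)
  have : Nonempty t := ht.to_subtype
  let H := G.induce (t : Set V)
  have hsub : s ⊆ H.edgeFinset.image (Sym2.map Subtype.val) := by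
    intro e he
    obtain ⟨heG, het⟩ := hs e he
    induction e using Sym2.ind with
    | h a b =>
      refine mem_image.mpr ⟨s(⟨a, het a (Sym2.mem_mk_left a b)⟩,
        ⟨b, het b (Sym2.mem_mk_right a b)⟩), ?_, rfl⟩
      simpa [H] using heG
  calc #s ≤ #H.edgeFinset := (card_le_card hsub).trans card_image_le
    _ ≤ Fintype.card t - 1 := Nat.le_sub_one_of_lt (hG.induce _).card_edgeFinset_lt
    _ = #t - 1 := by rw [Fintype.card_coe]

theorem isSparse_of_forall_isAcyclic {G : SimpleGraph V} {k : ℕ} (f : Sym2 V → Fin k)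
    (hf : ∀ i, (fromEdgeSet {e | e ∈ G.edgeSet ∧ f e = i}).IsAcyclic) : G.IsSparse k := by
  intro t s hs
  calc #s = ∑ i, #(s.filter (f · = i)) := card_eq_sum_card_fiberwise fun _ _ => mem_univ _
    _ ≤ ∑ _i : Fin k, (#t - 1) := sum_le_sum fun i _ => by
        simpa using (hf i).isSparse t (s.filter (f · = i)) fun e he => by
          obtain ⟨hes, rfl⟩ := mem_filter.mp he
          obtain ⟨heG, het⟩ := hs e hes
          refine ⟨?_, het⟩
          rw [edgeSet_fromEdgeSet]
          exact ⟨⟨heG, rfl⟩, not_isDiag_of_mem_edgeSet _ heG⟩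
    _ = k * (#t - 1) := by simp

end SimpleGraph

theorem Subgroup.zpow_sub_mem_of_zpow_two_mul_add_one_mem {G : Type*} [Group G] {H : Subgroup G}
    {a : G} {i j : ℤ} (hi : a ^ (2 * i + 1) ∈ H) (hj : a ^ (2 * j + 1) ∈ H) : a ^ (i - j) ∈ H := by
  have heven : a ^ (2 * (i - j)) ∈ H := by
    have := H.mul_mem hi (H.inv_mem hj)
    rwa [← zpow_neg, ← zpow_add, show 2 * i + 1 + -(2 * j + 1) = 2 * (i - j) by ring] at this
  have : a ^ (i - j) = (a ^ (2 * i + 1)) ^ (i - j) * (a ^ (2 * (i - j))) ^ (-i) := by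
    rw [← zpow_mul, ← zpow_mul, ← zpow_add]
    ring_nf
  rw [this]
  exact H.mul_mem (H.zpow_mem hi _) (H.zpow_mem heven _)

namespace Equiv.Perm

variable {V : Type*} {g g' : Perm V} {u x y : V}

theorem semiconjBy_mul_inv_of_involutive (hg : Function.Involutive g)
    (hg' : Function.Involutive g') : SemiconjBy g (g * g') (g * g')⁻¹ := by
  have hg1 : g * g = 1 := Equiv.ext hg
  have hg'1 : g' * g' = 1 := Equiv.ext hg'
  rw [SemiconjBy, ← mul_assoc, hg1, one_mul, mul_inv_rev, inv_eq_of_mul_eq_one_left hg1,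
    inv_eq_of_mul_eq_one_left hg'1, mul_assoc, hg1, mul_one]

theorem SameCycle.apply_left_of_involutive (hg : Function.Involutive g)
    (hg' : Function.Involutive g') (hu : g u = u) (h : (g * g').SameCycle u x) :
    (g * g').SameCycle u (g x) := by
  have hconj : g * (g * g') * g⁻¹ = (g * g')⁻¹ :=
    mul_inv_eq_of_eq_mul (semiconjBy_mul_inv_of_involutive hg hg')
  have := h.conj (g := g)
  rwa [hconj, sameCycle_inv, hu] at this

theorem SameCycle.apply_right_of_involutive (hg : Function.Involutive g)
    (hg' : Function.Involutive g') (hu : g u = u) (h : (g * g').SameCycle u x) :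
    (g * g').SameCycle u (g' x) := by
  have := (sameCycle_apply_right.mpr h).apply_left_of_involutive hg hg' hu
  rwa [Perm.mul_apply, hg] at this

theorem SameCycle.eq_of_apply_eq_self (hg : Function.Involutive g)
    (hg' : Function.Involutive g') (hu : g u = u) (hx : (g * g').SameCycle u x)
    (hy : (g * g').SameCycle u y) (hgx : g' x = x) (hgy : g' y = y) : x = y := by
  set σ := g * g'
  have hconj : ∀ k : ℤ, g * σ ^ k = σ ^ (-k) * g := fun k => by
    rw [zpow_neg, ← inv_zpow]
    exact (semiconjBy_mul_inv_of_involutive hg hg').zpow_right k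
  have hg'σ : g' = g * σ := by rw [← mul_assoc, (Equiv.ext hg : g * g = 1), one_mul]
  have hstab : ∀ i : ℤ, g' ((σ ^ i) u) = (σ ^ i) u →
      σ ^ (2 * i + 1) ∈ MulAction.stabilizer (Perm V) u := fun i hi => by
    have e : g' ((σ ^ i) u) = (σ ^ (-(i + 1))) u := by
      rw [hg'σ, ← Perm.mul_apply, mul_assoc, ← zpow_one_add, hconj, Perm.mul_apply, hu,
        add_comm]
    rw [MulAction.mem_stabilizer_iff, Perm.smul_def, show 2 * i + 1 = (i + 1) + i by ring,
      zpow_add, Perm.mul_apply, ← hi, e, ← Perm.mul_apply, ← zpow_add, add_neg_cancel,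
      zpow_zero, Perm.one_apply]
  obtain ⟨i, rfl⟩ := hx
  obtain ⟨j, rfl⟩ := hy
  have hij := Subgroup.zpow_sub_mem_of_zpow_two_mul_add_one_mem (hstab i hgx) (hstab j hgy)
  rw [MulAction.mem_stabilizer_iff, Perm.smul_def] at hij
  rw [← add_sub_cancel j i, zpow_add, Perm.mul_apply, hij]

section Finite

variable [Fintype V] [DecidableEq V]

theorem card_support_add_card_sdiff_of_piecewise {f g g' : Perm V} {S : Finset V}
    (hin : ∀ x ∈ S, f x = g' x) (hout : ∀ x ∉ S, f x = g x) :
    #f.support + #(S \ g'.support) = #g.support + #(S \ g.support) := by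
  have hS : S \ f.support = S \ g'.support := by
    ext x
    simp +contextual [hin]
  have hout' : f.support \ S = g.support \ S := by
    ext x
    simp +contextual [hout]
  calc #f.support + #(S \ g'.support) = #(f.support \ S) + #S := by
        rw [← hS, add_comm, card_sdiff_add_card, card_sdiff_add_card, union_comm]
    _ = #g.support + #(S \ g.support) := by
        rw [hout', add_comm #g.support, card_sdiff_add_card, card_sdiff_add_card, union_comm]

end Finite

end Equiv.Perm

section MatchingSet

variable {V : Type*} {G H : SimpleGraph V}

theorem IsMatchingSet.eq_of_mem {M : Finset (Sym2 V)} (hM : IsMatchingSet G M) {x y z : V}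
    (hy : s(x, y) ∈ M) (hz : s(x, z) ∈ M) : y = z := by
  by_contra hyz
  exact hM.2 _ hy _ hz (fun h => hyz (Sym2.congr_right.mp h)) x (Sym2.mem_mk_left x y)
    (Sym2.mem_mk_left x z)

theorem IsMatchingSet.mono {M : Finset (Sym2 V)} (hGH : G ≤ H) (hM : IsMatchingSet G M) :
    IsMatchingSet H M :=
  ⟨hM.1.trans (SimpleGraph.edgeSet_mono hGH), hM.2⟩

variable [Fintype V]

theorem bddAbove_matchingCards (G : SimpleGraph V) :
    BddAbove {n | ∃ M : Finset (Sym2 V), IsMatchingSet G M ∧ #M = n} :=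
  ⟨Fintype.card (Sym2 V), by rintro n ⟨M, -, rfl⟩; exact card_le_univ M⟩

theorem IsMatchingSet.card_le_matchNum {M : Finset (Sym2 V)} (hM : IsMatchingSet G M) :
    #M ≤ matchNum G :=
  le_csSup (bddAbove_matchingCards G) ⟨M, hM, rfl⟩

theorem exists_isMatchingSet_card_eq_matchNum (G : SimpleGraph V) :
    ∃ M : Finset (Sym2 V), IsMatchingSet G M ∧ #M = matchNum G :=
  Nat.sSup_mem (s := {n | ∃ M : Finset (Sym2 V), IsMatchingSet G M ∧ #M = n})
    ⟨0, ∅, ⟨by simp, by simp⟩, rfl⟩ (bddAbove_matchingCards G)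

theorem matchNum_mono (hGH : G ≤ H) : matchNum G ≤ matchNum H := by
  obtain ⟨M, hM, hMG⟩ := exists_isMatchingSet_card_eq_matchNum G
  exact hMG ▸ (hM.mono hGH).card_le_matchNum

end MatchingSet

namespace SimpleGraph

variable {V : Type*} {G H : SimpleGraph V} {g g' : Equiv.Perm V} {u v w : V}

/-- A matching encoded as the involution exchanging the two ends of each matching edge. -/
structure IsMatchingPerm (G : SimpleGraph V) (g : Equiv.Perm V) : Prop where
  involutive : Function.Involutive g
  adj : ∀ x, g x ≠ x → G.Adj x (g x)

theorem IsMatchingPerm.mono (hGH : G ≤ H) (hg : G.IsMatchingPerm g) :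
    H.IsMatchingPerm g :=
  ⟨hg.involutive, fun x hx => hGH (hg.adj x hx)⟩

section DecidableEq

variable [DecidableEq V]

theorem IsMatchingPerm.swap_mul (hg : G.IsMatchingPerm g) (hadj : G.Adj u w) (hu : g u = u)
    (hw : g w = w) : G.IsMatchingPerm (Equiv.swap u w * g) := by
  have hne : ∀ x, x ≠ u → x ≠ w → g x ≠ u ∧ g x ≠ w := fun x hxu hxw =>
    ⟨fun h => hxu (by rw [← hg.involutive x, h, hu]),
      fun h => hxw (by rw [← hg.involutive x, h, hw])⟩
  refine ⟨fun x => ?_, fun x hx => ?_⟩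
  · by_cases hxu : x = u
    · subst hxu; simp [hu, hw]
    by_cases hxw : x = w
    · subst hxw; simp [hu, hw]
    simp [Equiv.swap_apply_of_ne_of_ne (hne x hxu hxw).1 (hne x hxu hxw).2, hg.involutive x,
      Equiv.swap_apply_of_ne_of_ne hxu hxw]
  · by_cases hxu : x = u
    · subst hxu; simpa [hu] using hadj
    by_cases hxw : x = w
    · subst hxw; simpa [hw] using hadj.symm
    rw [Equiv.Perm.mul_apply, Equiv.swap_apply_of_ne_of_ne (hne x hxu hxw).1 (hne x hxu hxw).2]
      at hx ⊢
    exact hg.adj x hx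

theorem IsMatchingPerm.exists_piecewise (hg : G.IsMatchingPerm g) (hg' : G.IsMatchingPerm g')
    {S : Finset V} (hSg : ∀ x ∈ S, g x ∈ S) (hSg' : ∀ x ∈ S, g' x ∈ S) :
    ∃ h : Equiv.Perm V, G.IsMatchingPerm h ∧ (∀ x ∈ S, h x = g' x) ∧ ∀ x ∉ S, h x = g x := by
  have hSg_out : ∀ x ∉ S, g x ∉ S := fun x hx hgx => hx (hg.involutive x ▸ hSg _ hgx)
  have hinv : Function.Involutive (S.piecewise g' g) := fun x => by
    by_cases hx : x ∈ S
    · simp [hx, hSg' x hx, hg'.involutive x]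
    · simp [hx, hSg_out x hx, hg.involutive x]
  refine ⟨hinv.toPerm _, ⟨hinv, fun x hx => ?_⟩, fun x hx => by simp [hx],
    fun x hx => by simp [hx]⟩
  by_cases hxS : x ∈ S
  · simp only [Function.Involutive.coe_toPerm, hxS, Finset.piecewise_eq_of_mem] at hx ⊢
    exact hg'.adj x hx
  · simp only [Function.Involutive.coe_toPerm, hxS, not_false_eq_true,
      Finset.piecewise_eq_of_notMem] at hx ⊢
    exact hg.adj x hx

variable [Fintype V]

theorem IsMatchingPerm.card_support_le (hg : G.IsMatchingPerm g) :
    #g.support ≤ 2 * matchNum G := by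
  set M := g.support.image fun x => s(x, g x)
  have hpartner : ∀ x v, v ∈ s(x, g x) → s(x, g x) = s(v, g v) := by
    rintro x v hv
    rcases Sym2.mem_iff.mp hv with rfl | rfl
    · rfl
    · rw [hg.involutive x, Sym2.eq_swap]
  have hM : IsMatchingSet G M := by
    refine ⟨?_, ?_⟩
    · intro e he
      obtain ⟨x, hx, rfl⟩ := mem_image.mp he
      exact hg.adj x (Equiv.Perm.mem_support.mp hx)
    · intro e he f hf hef v hve hvf
      obtain ⟨x, -, rfl⟩ := mem_image.mp he
      obtain ⟨y, -, rfl⟩ := mem_image.mp hf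
      exact hef ((hpartner x v hve).trans (hpartner y v hvf).symm)
  have hcount : #g.support * 1 ≤ #M * 2 := by
    refine card_mul_le_card_mul (· ∈ ·) (fun x hx => card_pos.mpr ⟨s(x, g x), ?_⟩)
      (fun e he => ?_)
    · exact (mem_bipartiteAbove _).mpr ⟨mem_image_of_mem _ hx, Sym2.mem_mk_left _ _⟩
    · obtain ⟨x, -, rfl⟩ := mem_image.mp he
      refine (card_le_card (t := {x, g x}) fun v hv => ?_).trans card_le_two
      simpa [Sym2.mem_iff] using ((mem_bipartiteBelow _).mp hv).2
  have := hM.card_le_matchNum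
  omega

theorem _root_.IsMatchingSet.exists_isMatchingPerm {M : Finset (Sym2 V)}
    (hM : IsMatchingSet G M) : ∃ g : Equiv.Perm V, G.IsMatchingPerm g ∧ 2 * #M ≤ #g.support := by
  let p : V → V := fun x => if h : ∃ y, s(x, y) ∈ M then h.choose else x
  have hp : ∀ x y, s(x, y) ∈ M → p x = y := fun x y hxy => by
    have h : ∃ y, s(x, y) ∈ M := ⟨y, hxy⟩
    simpa only [p, dif_pos h] using hM.eq_of_mem h.choose_spec hxy
  have hp' : ∀ x, (¬ ∃ y, s(x, y) ∈ M) → p x = x := fun x h => by simp only [p, dif_neg h]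
  have hinv : Function.Involutive p := by
    intro x
    by_cases h : ∃ y, s(x, y) ∈ M
    · obtain ⟨y, hy⟩ := h
      rw [hp x y hy, hp y x (Sym2.eq_swap ▸ hy)]
    · rw [hp' x h, hp' x h]
  have hne : ∀ x y, s(x, y) ∈ M → x ≠ y := fun x y h => G.ne_of_adj (hM.1 h)
  refine ⟨hinv.toPerm p, ⟨hinv, fun x hx => ?_⟩, ?_⟩
  · by_cases h : ∃ y, s(x, y) ∈ M
    · obtain ⟨y, hy⟩ := h
      simpa [hp x y hy] using hM.1 hy
    · exact absurd (hp' x h) hx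
  · have hcount : #M * 2 ≤ #(hinv.toPerm p).support * 1 := by
      refine card_mul_le_card_mul (fun e x => x ∈ e) (fun e he => ?_) (fun x hx => ?_)
      · induction e using Sym2.ind with
        | h a b =>
          have hmoved : ∀ x y, s(x, y) ∈ M → x ∈ (hinv.toPerm p).support := fun x y hxy =>
            Equiv.Perm.mem_support.mpr <| by
              rw [Function.Involutive.coe_toPerm, hp x y hxy]
              exact (hne x y hxy).symm
          refine le_of_eq_of_le (card_pair (hne a b he)).symm (card_le_card fun v hv => ?_)
          rw [mem_bipartiteAbove]
          rcases mem_insert.mp hv with rfl | hv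
          · exact ⟨hmoved v b he, Sym2.mem_mk_left v b⟩
          · rw [mem_singleton.mp hv]
            exact ⟨hmoved b a (Sym2.eq_swap ▸ he), Sym2.mem_mk_right a b⟩
      · rw [card_le_one]
        intro e he f hf
        simp only [mem_bipartiteBelow] at he hf
        by_contra hef
        exact hM.2 e he.1 f hf.1 hef x he.2 hf.2
    omega

theorem exists_isMatchingPerm_card_support_eq (G : SimpleGraph V) :
    ∃ g : Equiv.Perm V, G.IsMatchingPerm g ∧ #g.support = 2 * matchNum G := by
  obtain ⟨M, hM, hMG⟩ := exists_isMatchingSet_card_eq_matchNum G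
  obtain ⟨g, hg, hcard⟩ := hM.exists_isMatchingPerm
  exact ⟨g, hg, le_antisymm hg.card_support_le (hMG ▸ hcard)⟩

def IsMaximumMatchingPerm (G : SimpleGraph V) (g : Equiv.Perm V) : Prop :=
  G.IsMatchingPerm g ∧ #g.support = 2 * matchNum G

theorem IsMaximumMatchingPerm.not_adj (hg : G.IsMaximumMatchingPerm g) (hu : g u = u)
    (hw : g w = w) : ¬ G.Adj u w := by
  intro hadj
  have hdisj : (Equiv.swap u w).Disjoint g := fun x => by
    by_cases hxu : x = u
    · simp [hxu, hu]
    by_cases hxw : x = w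
    · simp [hxw, hw]
    exact Or.inl (Equiv.swap_apply_of_ne_of_ne hxu hxw)
  have := (hg.1.swap_mul hadj hu hw).card_support_le
  rw [hdisj.card_support_mul, Equiv.Perm.card_support_swap hadj.ne, hg.2] at this
  omega

theorem IsMaximumMatchingPerm.exists_exchange (hg : G.IsMaximumMatchingPerm g)
    (hg' : G.IsMaximumMatchingPerm g') (hu : g u = u) :
    ∃ S : Finset V, u ∈ S ∧ (∀ x ∈ S, g x = x → x = u) ∧
      (∃ h, G.IsMaximumMatchingPerm h ∧ (∀ x ∈ S, h x = g' x) ∧ ∀ x ∉ S, h x = g x) ∧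
      (∃ h, G.IsMaximumMatchingPerm h ∧ (∀ x ∈ S, h x = g x) ∧ ∀ x ∉ S, h x = g' x) := by
  have hgi := hg.1.involutive
  have hgi' := hg'.1.involutive
  -- The cycle of `g * g'` through `u`: the alternating path of `g` and `g'` starting at `u`.
  set S := univ.filter ((g * g').SameCycle u)
  have hSg : ∀ x ∈ S, g x ∈ S := fun x hx => by
    simpa [S] using (mem_filter.mp hx).2.apply_left_of_involutive hgi hgi' hu
  have hSg' : ∀ x ∈ S, g' x ∈ S := fun x hx => by
    simpa [S] using (mem_filter.mp hx).2.apply_right_of_involutive hgi hgi' hu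
  obtain ⟨h₁, hh₁, hin₁, hout₁⟩ := hg.1.exists_piecewise hg'.1 hSg hSg'
  obtain ⟨h₂, hh₂, hin₂, hout₂⟩ := hg'.1.exists_piecewise hg.1 hSg' hSg
  have hc₁ := Equiv.Perm.card_support_add_card_sdiff_of_piecewise hin₁ hout₁
  have hc₂ := Equiv.Perm.card_support_add_card_sdiff_of_piecewise hin₂ hout₂
  have hle₁ := hh₁.card_support_le
  have hle₂ := hh₂.card_support_le
  have hfix' : #(S \ g'.support) ≤ 1 := card_le_one.mpr fun x hx y hy => by
    simp only [S, mem_sdiff, mem_filter, Equiv.Perm.mem_support, not_not] at hx hy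
    exact hx.1.2.eq_of_apply_eq_self hgi hgi' hu hy.1.2 hx.2 hy.2
  have huS : u ∈ S \ g.support := by simp [S, hu, Equiv.Perm.SameCycle.refl]
  -- By `hc₁` and `hc₂` the two exchanges trade matched for unmatched vertices of `S` in opposite
  -- amounts, so both are maximum and `S` has as many `g`-fixed points as `g'`-fixed points.
  refine ⟨S, (mem_sdiff.mp huS).1, fun x hx hgx => ?_, ⟨h₁, ⟨hh₁, ?_⟩, hin₁, hout₁⟩,
    ⟨h₂, ⟨hh₂, ?_⟩, hin₂, hout₂⟩⟩
  · have hfix : #(S \ g.support) ≤ 1 := by have := hg.2; have := hg'.2; omega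
    exact card_le_one.mp hfix x (by simp [hx, hgx]) u huS
  all_goals have := hg.2; have := hg'.2; omega

/-- Gallai's lemma. Along a walk `u w ⋯ v`, pick `g'` among the maximum matchings missing `w` so
that it agrees with `g` as often as possible; exchanging along the alternating path from `u` either
leads to the shorter walk from `w` or produces a better choice of `g'`. -/
theorem IsMaximumMatchingPerm.eq_of_walk (hav : ∀ w, ∃ g, G.IsMaximumMatchingPerm g ∧ g w = w)
    (p : G.Walk u v) (hg : G.IsMaximumMatchingPerm g) (hu : g u = u) (hv : g v = v) : u = v := by
  induction p generalizing g with
  | nil => rfl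
  | @cons u w v hadj q ih =>
    have hw : g w ≠ w := fun hw => hg.not_adj hu hw hadj
    set agree : Equiv.Perm V → ℕ := fun h => #(univ.filter fun x => h x = g x)
    obtain ⟨g', hg'mem, hbest⟩ := (univ.filter fun h => G.IsMaximumMatchingPerm h ∧ h w = w)
      |>.exists_max_image agree (by obtain ⟨h, hh⟩ := hav w; exact ⟨h, by simpa using hh⟩)
    obtain ⟨hg', hg'w⟩ := (mem_filter.mp hg'mem).2
    have hg'u : g' u ≠ u := fun h => hg'.not_adj h hg'w hadj
    obtain ⟨S, huS, hSu, ⟨h₁, hh₁, hin₁, hout₁⟩, ⟨h₂, hh₂, hin₂, hout₂⟩⟩ :=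
      hg.exists_exchange hg' hu
    by_cases hvS : v ∈ S
    · exact (hSu v hvS hv).symm
    by_cases hwS : w ∈ S
    · have hwv := ih hh₁ (by rw [hin₁ w hwS, hg'w]) (by rw [hout₁ v hvS, hv])
      exact absurd (hwv ▸ hv) hw
    · have hlt : agree g' < agree h₂ := by
        refine card_lt_card ⟨fun x hx => ?_, fun hsub => ?_⟩
        · simp only [mem_filter, mem_univ, true_and] at hx ⊢
          by_cases hxS : x ∈ S
          · exact hin₂ x hxS
          · rw [hout₂ x hxS, hx]
        · have := (mem_filter.mp (hsub (mem_filter.mpr ⟨mem_univ u, hin₂ u huS⟩))).2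
          exact hg'u (this.trans hu)
      have := hbest h₂ (by simp [hh₂, hout₂ w hwS, hg'w])
      omega

variable {k : ℕ}

theorem IsSparse.card_edgeFinset_le_of_pairwise_reachable_eq [DecidableRel G.Adj]
    (hG : G.IsSparse k) (F : Finset V) (hF : ∀ u ∈ F, ∀ v ∈ F, G.Reachable u v → u = v) :
    #G.edgeFinset ≤ k * (Fintype.card V - #F) := by
  set c := G.connectedComponentMk
  set C := univ.image c
  set t : G.ConnectedComponent → Finset V := fun γ => univ.filter (c · = γ)
  have hedges : G.edgeFinset ⊆ C.biUnion fun γ => G.edgeFinset.filter (∀ x ∈ ·, c x = γ) := by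
    intro e he
    induction e using Sym2.ind with
    | h a b =>
      refine mem_biUnion.mpr ⟨c a, mem_image_of_mem c (mem_univ a), mem_filter.mpr ⟨he, ?_⟩⟩
      intro x hx
      rcases Sym2.mem_iff.mp hx with rfl | rfl
      · rfl
      · exact (ConnectedComponent.connectedComponentMk_eq_of_adj (mem_edgeFinset.mp he)).symm
  have hFC : #F ≤ #C := card_le_card_of_injOn c (fun x _ => mem_image_of_mem c (mem_univ x))
    fun x hx y hy hxy => hF x hx y hy (ConnectedComponent.exact hxy)
  have hV : Fintype.card V = ∑ γ ∈ C, #(t γ) := card_eq_sum_card_image c univ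
  have ht : ∀ γ ∈ C, 1 ≤ #(t γ) := fun γ hγ => by
    obtain ⟨x, -, rfl⟩ := mem_image.mp hγ
    exact card_pos.mpr ⟨x, by simp [t]⟩
  calc #G.edgeFinset
      ≤ ∑ γ ∈ C, #(G.edgeFinset.filter (∀ x ∈ ·, c x = γ)) :=
        (card_le_card hedges).trans card_biUnion_le
    _ ≤ ∑ γ ∈ C, k * (#(t γ) - 1) := sum_le_sum fun γ _ => hG _ _ fun e he =>
        ⟨mem_edgeFinset.mp (mem_filter.mp he).1,
          fun x hx => by simp [t, (mem_filter.mp he).2 x hx]⟩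
    _ = k * (Fintype.card V - #C) := by
        rw [← mul_sum, sum_tsub_distrib C ht, hV, card_eq_sum_ones C]
    _ ≤ k * (Fintype.card V - #F) := by gcongr

theorem IsSparse.card_edgeFinset_le_mul_matchNum {D : ℕ} [DecidableRel G.Adj]
    (hG : G.IsSparse k) (hdeg : ∀ v, G.degree v ≤ D) (hkD : 2 * k ≤ D) :
    #G.edgeFinset ≤ D * matchNum G := by
  induction G using WellFoundedLT.induction generalizing ‹DecidableRel G.Adj› with
  | ind G ih =>
  by_cases hess : ∃ v, matchNum (G.deleteIncidenceSet v) < matchNum G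
  · obtain ⟨v, hv⟩ := hess
    have hlt : G.deleteIncidenceSet v < G :=
      lt_of_le_of_ne (deleteIncidenceSet_le G v) fun h => hv.ne (by rw [h])
    have := ih _ hlt (hG.anti hlt.le) fun x => (degree_le_of_le hlt.le).trans (hdeg x)
    have := card_edgeFinset_deleteIncidenceSet G v
    have := G.degree_le_card_edgeFinset v
    have := hdeg v
    calc #G.edgeFinset ≤ #(G.deleteIncidenceSet v).edgeFinset + D := by omega
      _ ≤ D * matchNum (G.deleteIncidenceSet v) + D := by gcongr
      _ ≤ D * matchNum G := by rw [← mul_add_one]; gcongr; omega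
  · simp only [not_exists, not_lt] at hess
    have hav : ∀ w, ∃ g, G.IsMaximumMatchingPerm g ∧ g w = w := fun w => by
      obtain ⟨g, hg, hcard⟩ := exists_isMatchingPerm_card_support_eq (G.deleteIncidenceSet w)
      refine ⟨g, ⟨hg.mono (deleteIncidenceSet_le G w), ?_⟩, ?_⟩
      · rw [hcard, le_antisymm (matchNum_mono (deleteIncidenceSet_le G w)) (hess w)]
      · by_contra hw
        exact (deleteIncidenceSet_adj.mp (hg.adj w hw)).2.1 rfl
    obtain ⟨g, hg, hcard⟩ := exists_isMatchingPerm_card_support_eq G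
    have hF := hG.card_edgeFinset_le_of_pairwise_reachable_eq (univ.filter fun x => g x = x)
      fun x hx y hy ⟨p⟩ => IsMaximumMatchingPerm.eq_of_walk hav p ⟨hg, hcard⟩
        (mem_filter.mp hx).2 (mem_filter.mp hy).2
    have hsupp : Fintype.card V - #(univ.filter (fun x => g x = x)) = #g.support := by
      rw [← card_univ, ← card_filter_add_card_filter_not (s := univ) (fun x => g x = x)]
      simp [Equiv.Perm.support]
    calc #G.edgeFinset ≤ k * (2 * matchNum G) := by rwa [hsupp, hcard] at hF
      _ ≤ D * matchNum G := by rw [← mul_assoc]; gcongr; omega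

variable [DecidableRel G.Adj] {d : ℕ}

theorem IsSparse.sum_degree_le (hG : G.IsSparse k) {I X : Finset V}
    (hI : ∀ x ∈ I, ∀ y ∈ I, ¬ G.Adj x y) (hX : ∀ x ∈ I, ∀ y, G.Adj x y → y ∈ X) :
    ∑ x ∈ I, G.degree x ≤ k * (#X + #I) := by
  have hadj_of_mem : ∀ x e, e ∈ G.incidenceFinset x → ∀ z ∈ e, z ≠ x → G.Adj x z :=
    fun x e he z hz hzx => by
      obtain ⟨heG, hxe⟩ := (mem_incidenceFinset G x e).mp he
      rwa [(Sym2.mem_and_mem_iff hzx.symm).mp ⟨hxe, hz⟩] at heG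
  have hdisj : (I : Set V).PairwiseDisjoint fun x => G.incidenceFinset x := fun x hx y hy hxy =>
    Finset.disjoint_left.mpr fun {e} hex hey => by
      obtain ⟨-, hye⟩ := (mem_incidenceFinset G y e).mp hey
      exact hI x hx y hy (hadj_of_mem x e hex y hye (Ne.symm hxy))
  calc ∑ x ∈ I, G.degree x = #(I.biUnion fun x => G.incidenceFinset x) := by
        simp_rw [card_biUnion hdisj, card_incidenceFinset_eq_degree]
    _ ≤ k * (#(X ∪ I) - 1) := hG _ _ fun e he => by
        obtain ⟨x, hxI, hex⟩ := mem_biUnion.mp he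
        refine ⟨((mem_incidenceFinset G x e).mp hex).1, fun z hz => ?_⟩
        by_cases hzx : z = x
        · exact mem_union_right _ (hzx ▸ hxI)
        · exact mem_union_left _ (hX x hxI z (hadj_of_mem x e hex z hz hzx))
    _ ≤ k * (#X + #I) := by gcongr; exact tsub_le_self.trans (card_union_le X I)

theorem IsSparse.card_filter_le_degree_le_four_mul_matchNum (hG : G.IsSparse k)
    (hd : 2 * k < d) :
    #(univ.filter fun v => d ≤ G.degree v) ≤ 4 * matchNum G := by
  obtain ⟨g, hg, hcard⟩ := exists_isMatchingPerm_card_support_eq G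
  set I := univ.filter fun v => d ≤ G.degree v ∧ g v = v
  have hsplit : #(univ.filter fun v => d ≤ G.degree v) ≤ #g.support + #I :=
    (card_le_card fun v hv => by
      by_cases hgv : g v = v
      · exact mem_union_right _ (by simp_all [I])
      · exact mem_union_left _ (Equiv.Perm.mem_support.mpr hgv)).trans (card_union_le _ _)
  have hsum := hG.sum_degree_le (I := I) (X := g.support)
    (fun x hx y hy => IsMaximumMatchingPerm.not_adj ⟨hg, hcard⟩ (mem_filter.mp hx).2.2
      (mem_filter.mp hy).2.2)
    (fun x hx y hxy => Equiv.Perm.mem_support.mpr fun hy =>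
      IsMaximumMatchingPerm.not_adj ⟨hg, hcard⟩ (mem_filter.mp hx).2.2 hy hxy)
  have hdeg : #I * d ≤ ∑ x ∈ I, G.degree x := by
    simpa using card_nsmul_le_sum I (fun x => G.degree x) d fun x hx => (mem_filter.mp hx).2.1
  rw [hcard] at hsplit hsum
  have : #I ≤ 2 * matchNum G := by nlinarith
  omega

theorem IsSparse.card_filter_degree_lt_edgeFinset_le (hG : G.IsSparse k) (hd : 2 * k < d) :
    #(G.edgeFinset.filter fun e => ∀ v ∈ e, G.degree v < d) ≤ (d - 1) * matchNum G := by
  set S := G.edgeFinset.filter fun e => ∀ v ∈ e, G.degree v < d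
  set H := fromEdgeSet (S : Set (Sym2 V))
  have hSG : ∀ e ∈ S, e ∈ G.edgeSet := fun e he => mem_edgeFinset.mp (mem_filter.mp he).1
  have hHG : H ≤ G := (fromEdgeSet_le G).mpr fun e he => hSG e he.1
  have hHS : H.edgeFinset = S := by
    ext e
    rw [mem_edgeFinset, edgeSet_fromEdgeSet, Set.mem_sdiff, mem_coe]
    exact ⟨And.left, fun he => ⟨he, not_isDiag_of_mem_edgeSet G (hSG e he)⟩⟩
  have hdeg : ∀ v, H.degree v ≤ d - 1 := fun v => by
    by_cases hv : G.degree v < d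
    · have := degree_le_of_le (v := v) hHG
      omega
    · rw [← card_neighborFinset_eq_degree]
      refine (card_eq_zero.mpr (eq_empty_iff_forall_notMem.mpr fun w hw => hv ?_)).trans_le
        (Nat.zero_le _)
      have hvw : H.Adj v w := (mem_neighborFinset H v w).mp hw
      rw [fromEdgeSet_adj, mem_coe] at hvw
      exact (mem_filter.mp hvw.1).2 v (Sym2.mem_mk_left v w)
  calc #S = #H.edgeFinset := by rw [hHS]
    _ ≤ (d - 1) * matchNum H := by
        convert (hG.anti hHG).card_edgeFinset_le_mul_matchNum hdeg (by omega)
    _ ≤ (d - 1) * matchNum G := by gcongr; exact matchNum_mono hHG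

end DecidableEq

end SimpleGraph

theorem IsMatchingSet.card_le_card_add_card_filter_edgeFinset {V : Type*}
    {G : SimpleGraph V} [Fintype G.edgeSet] {M : Finset (Sym2 V)} (hM : IsMatchingSet G M)
    (X : Finset V) : #M ≤ #X + #(G.edgeFinset.filter fun e => ∀ v ∈ e, v ∉ X) := by
  rw [← card_filter_add_card_filter_not (s := M) (fun e => ∀ v ∈ e, v ∉ X), add_comm]
  gcongr
  · refine card_le_card_of_forall_subsingleton (fun e x => x ∈ e) (fun e he => ?_)
      fun x _ e he f hf => ?_
    · obtain ⟨x, hxe, hxX⟩ := by simpa using (mem_filter.mp he).2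
      exact ⟨x, hxX, hxe⟩
    · by_contra hef
      exact hM.2 e (mem_filter.mp he.1).1 f (mem_filter.mp hf.1).1 hef x he.2 hf.2
  · exact fun e he => SimpleGraph.mem_edgeFinset.mpr (hM.1 he)

theorem stmt_19_general {V : Type*} [Fintype V] [DecidableEq V]
    (ν : ℕ)
    (G : SimpleGraph V) [DecidableRel G.Adj]
    (harb : ∃ f : Sym2 V → Fin ν, ∀ i : Fin ν,
      (SimpleGraph.fromEdgeSet {e | e ∈ G.edgeSet ∧ f e = i}).IsAcyclic) :
    let h : ℕ := (Finset.univ.filter (fun v : V => 2 * ν + 3 ≤ G.degree v)).card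
    let s : ℕ := (G.edgeFinset.filter (fun e => ∀ v ∈ e, G.degree v < 2 * ν + 3)).card
    ((max h s : ℕ) : ℝ) / (2.5 * (ν : ℝ) + 4.5) ≤ (matchNum G : ℝ) ∧
      matchNum G ≤ 2 * max h s := by
  intro h s
  obtain ⟨f, hf⟩ := harb
  have hG := SimpleGraph.isSparse_of_forall_isAcyclic f hf
  have hh : h ≤ 4 * matchNum G := hG.card_filter_le_degree_le_four_mul_matchNum (by omega)
  have hs : s ≤ (2 * ν + 2) * matchNum G := hG.card_filter_degree_lt_edgeFinset_le (by omega)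
  have hμ : matchNum G ≤ h + s := by
    obtain ⟨M, hM, hMG⟩ := exists_isMatchingSet_card_eq_matchNum G
    rw [← hMG]
    convert hM.card_le_card_add_card_filter_edgeFinset
      (univ.filter fun v : V => 2 * ν + 3 ≤ G.degree v) using 4
    simp
  have hmax : 2 * max h s ≤ (5 * ν + 9) * matchNum G := by
    rcases max_cases h s with ⟨hm, -⟩ | ⟨hm, -⟩ <;> rw [hm] <;> nlinarith
  refine ⟨?_, by have := le_max_left h s; have := le_max_right h s; omega⟩
  rw [div_le_iff₀ (by positivity)]
  have : (2 : ℝ) * (max h s : ℕ) ≤ (5 * ν + 9) * matchNum G := by exact_mod_cast hmax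
  linarith

theorem stmt_19 {V : Type*} [Fintype V] [DecidableEq V]
    (ν : ℕ) (hν : 1 ≤ ν)
    (G : SimpleGraph V) [DecidableRel G.Adj]
    (harb : ∃ f : Sym2 V → Fin ν, ∀ i : Fin ν,
      (SimpleGraph.fromEdgeSet {e | e ∈ G.edgeSet ∧ f e = i}).IsAcyclic) :
    let h : ℕ := (Finset.univ.filter (fun v : V => 2 * ν + 3 ≤ G.degree v)).card
    let s : ℕ := (G.edgeFinset.filter (fun e => ∀ v ∈ e, G.degree v < 2 * ν + 3)).card
    ((max h s : ℕ) : ℝ) / (2.5 * (ν : ℝ) + 4.5) ≤ (matchNum G : ℝ) ∧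
      matchNum G ≤ 2 * max h s :=
  stmt_19_general ν G harb
end
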